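/- Let P = (p_{ij})_{i,j∈ℕ} be a double semi-stochastic matrix, i.e. p_{ij} ≥ 0, Σ_j p_{ij} ≤ 1 for every i, Σ_i p_{ij} ≤ 1 for every j, and suppose λ*(j) = lim_{n→∞} Σ_i (P^n)_{ij} = 0 for every j. If L is a nonnegative L∞-measure (L(i) ≥ 0, sup_i L(i) < ∞) satisfying L ≤ LP coordinate-wise, i.e. L(j) ≤ Σ_i L(i) p_{ij} for every j, then L = 0. -/

import Mathlib

open Filter Topology ENNReal

/-- The `n`-th power of a countably-indexed nonnegative matrix:
`(P^0)_{ij} = δ_{ij}` and `(P^{n+1})_{ij} = ∑_k (P^n)_{ik} p_{kj}`. -/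
noncomputable def matPow (P : ℕ → ℕ → ℝ≥0∞) : ℕ → ℕ → ℕ → ℝ≥0∞
  | 0 => fun i j => if i = j then 1 else 0
  | n + 1 => fun i j => ∑' k, matPow P n i k * P k j

/- Iterating `L ≤ LP` gives `L ≤ LPⁿ` for every `n`, so `L(j) ≤ (sup L) · ∑ᵢ (Pⁿ)ᵢⱼ`,
and the right-hand side tends to `0`. -/

theorem tsum_mul_matPow_zero (P : ℕ → ℕ → ℝ≥0∞) (L : ℕ → ℝ≥0∞) (j : ℕ) :
    ∑' i, L i * matPow P 0 i j = L j := by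
  rw [tsum_eq_single j fun i hi => by simp [matPow, hi]]
  simp [matPow]

theorem tsum_mul_matPow_succ (P : ℕ → ℕ → ℝ≥0∞) (L : ℕ → ℝ≥0∞) (n j : ℕ) :
    ∑' i, L i * matPow P (n + 1) i j = ∑' i, (∑' k, L k * matPow P n k i) * P i j := by
  simp only [matPow, ← ENNReal.tsum_mul_left, ← ENNReal.tsum_mul_right, mul_assoc]
  exact ENNReal.tsum_comm

theorem le_tsum_mul_matPow_of_le_tsum_mul {P : ℕ → ℕ → ℝ≥0∞} {L : ℕ → ℝ≥0∞}
    (hLP : ∀ j, L j ≤ ∑' i, L i * P i j) (n j : ℕ) :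
    L j ≤ ∑' i, L i * matPow P n i j := by
  induction n generalizing j with
  | zero => rw [tsum_mul_matPow_zero]
  | succ n ih =>
    calc L j ≤ ∑' i, L i * P i j := hLP j
      _ ≤ ∑' i, (∑' k, L k * matPow P n k i) * P i j :=
        ENNReal.tsum_le_tsum fun i => mul_le_mul_left (ih i) _
      _ = ∑' i, L i * matPow P (n + 1) i j := (tsum_mul_matPow_succ P L n j).symm

theorem subinvariant_Linfty_measure_zero_general
    (P : ℕ → ℕ → ℝ≥0∞)
    (hzero : ∀ j, Tendsto (fun n => ∑' i, matPow P n i j) atTop (𝓝 0))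
    (L : ℕ → ℝ≥0∞) (C : ℝ≥0∞) (hC : C ≠ ⊤) (hLC : ∀ i, L i ≤ C)
    (hLP : ∀ j, L j ≤ ∑' i, L i * P i j) :
    ∀ j, L j = 0 := by
  intro j
  have hbound : ∀ n, L j ≤ C * ∑' i, matPow P n i j := fun n =>
    calc L j ≤ ∑' i, L i * matPow P n i j := le_tsum_mul_matPow_of_le_tsum_mul hLP n j
      _ ≤ ∑' i, C * matPow P n i j :=
        ENNReal.tsum_le_tsum fun i => mul_le_mul_left (hLC i) _
      _ = C * ∑' i, matPow P n i j := ENNReal.tsum_mul_left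
  have hlim : Tendsto (fun n => C * ∑' i, matPow P n i j) atTop (𝓝 0) := by
    simpa using ENNReal.Tendsto.const_mul (hzero j) (Or.inr hC)
  exact le_antisymm (ge_of_tendsto' hlim hbound) zero_le

/-- For a double semi-stochastic matrix `P` with
`λ*(j) = lim_n ∑_i (Pⁿ)_{ij} = 0` for every `j`, any nonnegative `L∞`-measure `L` with
`L ≤ LP` coordinate-wise must vanish. -/
theorem subinvariant_Linfty_measure_zero
    (P : ℕ → ℕ → ℝ≥0∞)
    (hrow : ∀ i, ∑' j, P i j ≤ 1)
    (hcol : ∀ j, ∑' i, P i j ≤ 1)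
    (hzero : ∀ j, Tendsto (fun n => ∑' i, matPow P n i j) atTop (𝓝 0))
    (L : ℕ → ℝ≥0∞) (C : ℝ≥0∞) (hC : C ≠ ⊤) (hLC : ∀ i, L i ≤ C)
    (hLP : ∀ j, L j ≤ ∑' i, L i * P i j) :
    ∀ j, L j = 0 :=
  subinvariant_Linfty_measure_zero_general P hzero L C hC hLC hLP
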